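/- For c > 0, x ∈ D_c^n, and v ∈ ℝ^n, the parallel transport from the origin to x, expressed via gyrovector operations, admits the closed form log_x^c(x ⊕_c exp_0^c(v)) = (λ_0^c/λ_x^c) v = (1 − c‖x‖²) v. -/

import Mathlib

noncomputable section
open Real
open scoped RealInnerProductSpace
attribute [local instance] Classical.propDecidable

/-- Inverse hyperbolic tangent. -/
def artanh (x : ℝ) : ℝ := (1 / 2) * Real.log ((1 + x) / (1 - x))

/-- Inverse hyperbolic cosine. -/
def arcosh (x : ℝ) : ℝ := Real.log (x + Real.sqrt (x ^ 2 - 1))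

/-- Möbius addition on the ball `D_c^n`. -/
def mAdd {n : ℕ} (c : ℝ) (x y : EuclideanSpace ℝ (Fin n)) : EuclideanSpace ℝ (Fin n) :=
  (1 / (1 + 2 * c * ⟪x, y⟫ + c ^ 2 * ‖x‖ ^ 2 * ‖y‖ ^ 2)) •
    ((1 + 2 * c * ⟪x, y⟫ + c * ‖y‖ ^ 2) • x + (1 - c * ‖x‖ ^ 2) • y)

/-- Möbius scalar multiplication. -/
def mSmul {n : ℕ} (c r : ℝ) (x : EuclideanSpace ℝ (Fin n)) : EuclideanSpace ℝ (Fin n) :=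
  if x = 0 then 0 else
    ((1 / Real.sqrt c) * Real.tanh (r * _root_.artanh (Real.sqrt c * ‖x‖)) * ‖x‖⁻¹) • x

/-- Induced gyrovector distance. -/
def mDist {n : ℕ} (c : ℝ) (x y : EuclideanSpace ℝ (Fin n)) : ℝ :=
  (2 / Real.sqrt c) * _root_.artanh (Real.sqrt c * ‖mAdd c (-x) y‖)

/-- Conformal factor. -/
def lam {n : ℕ} (c : ℝ) (x : EuclideanSpace ℝ (Fin n)) : ℝ := 2 / (1 - c * ‖x‖ ^ 2)

/-- Exponential map at `x`. -/
def expMap {n : ℕ} (c : ℝ) (x v : EuclideanSpace ℝ (Fin n)) : EuclideanSpace ℝ (Fin n) :=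
  if v = 0 then x else
    mAdd c x ((Real.tanh (Real.sqrt c * lam c x * ‖v‖ / 2) / (Real.sqrt c * ‖v‖)) • v)

/-- Logarithmic map at `x`. -/
def logMap {n : ℕ} (c : ℝ) (x y : EuclideanSpace ℝ (Fin n)) : EuclideanSpace ℝ (Fin n) :=
  if mAdd c (-x) y = 0 then 0 else
    ((2 / (Real.sqrt c * lam c x)) * _root_.artanh (Real.sqrt c * ‖mAdd c (-x) y‖) *
      ‖mAdd c (-x) y‖⁻¹) • mAdd c (-x) y

/-- Exponential map at the origin. -/
def expZero {n : ℕ} (c : ℝ) (v : EuclideanSpace ℝ (Fin n)) : EuclideanSpace ℝ (Fin n) :=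
  if v = 0 then 0 else (Real.tanh (Real.sqrt c * ‖v‖) / (Real.sqrt c * ‖v‖)) • v

/-- Logarithmic map at the origin. -/
def logZero {n : ℕ} (c : ℝ) (y : EuclideanSpace ℝ (Fin n)) : EuclideanSpace ℝ (Fin n) :=
  if y = 0 then 0 else (_root_.artanh (Real.sqrt c * ‖y‖) / (Real.sqrt c * ‖y‖)) • y

/-- Möbius version of a linear map. -/
def mMap {n m : ℕ} (c : ℝ) (M : EuclideanSpace ℝ (Fin n) →ₗ[ℝ] EuclideanSpace ℝ (Fin m))
    (x : EuclideanSpace ℝ (Fin n)) : EuclideanSpace ℝ (Fin m) :=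
  if M x = 0 then 0 else
    ((1 / Real.sqrt c) * Real.tanh ((‖M x‖ / ‖x‖) * _root_.artanh (Real.sqrt c * ‖x‖)) *
      ‖M x‖⁻¹) • M x

/-!
Möbius addition has the left cancellation law `(-x) ⊕_c (x ⊕_c y) = y` on the ball. Hence
`log_x^c (x ⊕_c y) = (2 / (√c λ_x^c)) artanh(√c‖y‖) y / ‖y‖ = (1 - c‖x‖²) log_0^c y`, and
taking `y = exp_0^c v`, where `log_0^c ∘ exp_0^c = id`, gives the closed form.
-/

theorem mAdd_denom_pos {n : ℕ} {c : ℝ} (hc : 0 ≤ c) {x y : EuclideanSpace ℝ (Fin n)}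
    (hx : c * ‖x‖ ^ 2 < 1) (hy : c * ‖y‖ ^ 2 < 1) :
    0 < 1 + 2 * c * ⟪x, y⟫ + c ^ 2 * ‖x‖ ^ 2 * ‖y‖ ^ 2 := by
  -- By Cauchy–Schwarz the denominator is at least `(1 - c‖x‖‖y‖)²`.
  set p := c * ‖x‖ * ‖y‖
  have hp : p < 1 := by
    have : p ^ 2 < 1 := by
      calc p ^ 2 = (c * ‖x‖ ^ 2) * (c * ‖y‖ ^ 2) := by ring
        _ < 1 := by nlinarith [mul_nonneg hc (sq_nonneg ‖y‖)]
    nlinarith [show 0 ≤ p by positivity]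
  have hinner : -p ≤ c * ⟪x, y⟫ := by
    have := neg_le_of_abs_le (abs_real_inner_le_norm x y)
    nlinarith [mul_le_mul_of_nonneg_left this hc]
  nlinarith

theorem neg_mAdd_cancel_left {n : ℕ} {c : ℝ} (hc : 0 ≤ c) {x y : EuclideanSpace ℝ (Fin n)}
    (hx : c * ‖x‖ ^ 2 < 1) (hy : c * ‖y‖ ^ 2 < 1) :
    mAdd c (-x) (mAdd c x y) = y := by
  set D := 1 + 2 * c * ⟪x, y⟫ + c ^ 2 * ‖x‖ ^ 2 * ‖y‖ ^ 2
  set A := 1 + 2 * c * ⟪x, y⟫ + c * ‖y‖ ^ 2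
  set B := 1 - c * ‖x‖ ^ 2
  set z := mAdd c x y with hz_def
  have hD : 0 < D := mAdd_denom_pos hc hx hy
  have hB : 0 < B := by linarith
  have hz : z = D⁻¹ • (A • x + B • y) := by rw [hz_def, mAdd, one_div]
  have hinner : ⟪-x, z⟫ = -(A * ‖x‖ ^ 2 + B * ⟪x, y⟫) / D := by
    rw [hz]
    simp only [inner_neg_left, real_inner_smul_right, inner_add_right, real_inner_self_eq_norm_sq]
    field_simp
  have hnorm : ‖z‖ ^ 2 = (A ^ 2 * ‖x‖ ^ 2 + 2 * A * B * ⟪x, y⟫ + B ^ 2 * ‖y‖ ^ 2) / D ^ 2 := by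
    simp only [hz, norm_smul, mul_pow, norm_add_sq_real, real_inner_smul_left,
      real_inner_smul_right, Real.norm_eq_abs, sq_abs]
    field_simp
  have hcoef : 1 + 2 * c * ⟪-x, z⟫ + c * ‖z‖ ^ 2 = A * B / D := by
    rw [hinner, hnorm]
    field_simp
    ring
  have hdenom : 1 + 2 * c * ⟪-x, z⟫ + c ^ 2 * ‖-x‖ ^ 2 * ‖z‖ ^ 2 = B ^ 2 / D := by
    rw [norm_neg, hinner, hnorm]
    field_simp
    ring
  rw [mAdd, hcoef, hdenom, norm_neg, hz]
  match_scalars <;> field_simp <;> ring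

theorem tanh_pos {t : ℝ} (ht : 0 < t) : 0 < tanh t := by
  rw [tanh_eq_sinh_div_cosh]
  exact div_pos (sinh_pos_iff.mpr ht) (cosh_pos t)

theorem norm_expZero {n : ℕ} {c : ℝ} (hc : 0 < c) (v : EuclideanSpace ℝ (Fin n)) :
    ‖expZero c v‖ = tanh (√c * ‖v‖) / √c := by
  rcases eq_or_ne v 0 with rfl | hv
  · simp [expZero]
  have hs : 0 < √c * ‖v‖ := by positivity
  rw [expZero, if_neg hv, norm_smul, Real.norm_eq_abs, abs_of_pos (div_pos (tanh_pos hs) hs)]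
  field_simp

theorem mul_norm_expZero_sq_lt_one {n : ℕ} {c : ℝ} (hc : 0 < c) (v : EuclideanSpace ℝ (Fin n)) :
    c * ‖expZero c v‖ ^ 2 < 1 := by
  rw [norm_expZero hc, div_pow, Real.sq_sqrt hc.le, mul_div_cancel₀ _ hc.ne']
  exact tanh_sq_lt_one _

theorem logZero_expZero {n : ℕ} {c : ℝ} (hc : 0 < c) (v : EuclideanSpace ℝ (Fin n)) :
    logZero c (expZero c v) = v := by
  rcases eq_or_ne v 0 with rfl | hv
  · simp [expZero, logZero]
  have hs : 0 < √c * ‖v‖ := by positivity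
  have ht : 0 < tanh (√c * ‖v‖) := tanh_pos hs
  have hartanh : _root_.artanh (√c * ‖expZero c v‖) = √c * ‖v‖ := by
    rw [norm_expZero hc, mul_div_cancel₀ _ (Real.sqrt_pos.mpr hc).ne', _root_.artanh,
      ← Real.artanh_eq_half_log ⟨(neg_one_lt_tanh _).le, (tanh_lt_one _).le⟩, Real.artanh_tanh]
  rw [logZero, if_neg (norm_ne_zero_iff.mp (by rw [norm_expZero hc]; positivity)), hartanh,
    norm_expZero hc, expZero, if_neg hv, smul_smul]
  match_scalars
  field_simp

theorem logMap_mAdd {n : ℕ} {c : ℝ} (hc : 0 ≤ c) {x y : EuclideanSpace ℝ (Fin n)}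
    (hx : c * ‖x‖ ^ 2 < 1) (hy : c * ‖y‖ ^ 2 < 1) :
    logMap c x (mAdd c x y) = (1 - c * ‖x‖ ^ 2) • logZero c y := by
  have hB : 1 - c * ‖x‖ ^ 2 ≠ 0 := by linarith
  rw [logMap, logZero, neg_mAdd_cancel_left hc hx hy]
  split_ifs
  · simp
  rw [smul_smul, lam]
  congr 1
  field_simp

theorem lam_zero_div_lam {n : ℕ} (c : ℝ) (x : EuclideanSpace ℝ (Fin n)) :
    lam c (0 : EuclideanSpace ℝ (Fin n)) / lam c x = 1 - c * ‖x‖ ^ 2 := by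
  rw [lam, lam, norm_zero, div_div_eq_mul_div]
  ring

theorem parallel_transport_zero {n : ℕ} (c : ℝ) (hc : 0 < c)
    (x : EuclideanSpace ℝ (Fin n)) (hx : c * ‖x‖ ^ 2 < 1) (v : EuclideanSpace ℝ (Fin n)) :
    logMap c x (mAdd c x (expZero c v)) = (lam c (0 : EuclideanSpace ℝ (Fin n)) / lam c x) • v ∧
    logMap c x (mAdd c x (expZero c v)) = (1 - c * ‖x‖ ^ 2) • v := by
  have h : logMap c x (mAdd c x (expZero c v)) = (1 - c * ‖x‖ ^ 2) • v := by
    rw [logMap_mAdd hc.le hx (mul_norm_expZero_sq_lt_one hc v), logZero_expZero hc]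
  exact ⟨by rw [h, lam_zero_div_lam], h⟩
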